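/- Let (X,d) be a nonseparable metric space. Then there is no σ-finite doubling measure on X; that is, no measure μ on X is simultaneously σ-finite and doubling. -/

import Mathlib

/-!
A doubling measure charges every small ball, hence every nonempty open set. For such a measure the
balls of radius `ε/2` around the points of an `ε`-separated set are disjoint and of positive
measure, so σ-finiteness makes every `ε`-separated set countable. A maximal `ε`-separated set is an
`ε`-net, so the space has countable `ε`-nets for all `ε > 0` and is therefore separable.
-/

open Metric MeasureTheory Set

/-- `μ` is a doubling measure: for some `c ≥ 1` and `rμ > 0`,
`0 < μ(B(x,2r)) ≤ c·μ(B(x,r)) < ∞` for all `x` and `0 < r < rμ`. -/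
def IsDoubling {X : Type*} [MetricSpace X] [MeasurableSpace X] (μ : Measure X) : Prop :=
  ∃ (c rμ : ℝ), 1 ≤ c ∧ 0 < rμ ∧ ∀ (x : X) (r : ℝ), 0 < r → r < rμ →
    0 < μ (closedBall x (2 * r)) ∧
    μ (closedBall x (2 * r)) ≤ ENNReal.ofReal c * μ (closedBall x r) ∧
    μ (closedBall x r) < ⊤

open Function
open scoped NNReal ENNReal

namespace Metric

variable {X : Type*} [PseudoEMetricSpace X]

theorem exists_maximal_isSeparated (ε : ℝ≥0∞) (s : Set X) :
    ∃ N, Maximal (fun N ↦ N ⊆ s ∧ IsSeparated ε N) N :=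
  zorn_subset _ fun c hcS hc ↦ ⟨⋃₀ c,
    ⟨sUnion_subset fun _ hN ↦ (hcS hN).1, hc.pairwise_sUnion.2 fun _ hN ↦ (hcS hN).2⟩,
    fun _ hN ↦ subset_sUnion_of_mem hN⟩

theorem secondCountable_of_forall_isSeparated_countable
    (h : ∀ ε : ℝ≥0, ε ≠ 0 → ∀ N : Set X, IsSeparated ε N → N.Countable) :
    SecondCountableTopology X := by
  refine EMetric.secondCountable_of_almost_dense_set fun ε hε ↦ ?_
  obtain ⟨δ, hδ, hδε⟩ := ENNReal.lt_iff_exists_nnreal_btwn.1 hε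
  obtain ⟨N, hN⟩ := exists_maximal_isSeparated (δ : ℝ≥0∞) (univ : Set X)
  have hcover : univ ⊆ ⋃ y ∈ N, closedEBall y δ :=
    isCover_iff_subset_iUnion_closedEBall.1 (IsCover.of_maximal_isSeparated hN)
  refine ⟨N, h δ (by exact_mod_cast hδ.ne') N hN.1.2, univ_subset_iff.1 ?_⟩
  exact hcover.trans (iUnion₂_mono fun y _ ↦ closedEBall_subset_closedEBall hδε.le)

end Metric

section OpenPosMeasure

variable {X : Type*} [PseudoEMetricSpace X] [MeasurableSpace X] [OpensMeasurableSpace X]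

theorem Metric.IsSeparated.countable_of_isOpenPosMeasure (μ : Measure X) [SFinite μ]
    [μ.IsOpenPosMeasure] {ε : ℝ≥0∞} (hε : ε ≠ 0) {N : Set X} (hN : IsSeparated ε N) :
    N.Countable := by
  have hdisj : Pairwise (Disjoint on fun x : N ↦ eball (x : X) (ε / 2)) := fun x y hxy ↦
    eball_disjoint <| (ENNReal.add_halves ε).trans_le (hN x.2 y.2 (Subtype.coe_ne_coe.2 hxy)).le
  have hcount := Measure.countable_meas_pos_of_disjoint_iUnion (μ := μ)
    (fun _ ↦ measurableSet_eball) hdisj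
  have hpos : {x : N | 0 < μ (eball (x : X) (ε / 2))} = univ :=
    eq_univ_of_forall fun x ↦ measure_eball_pos μ x (ENNReal.half_pos hε).ne'
  rw [hpos, countable_univ_iff] at hcount
  exact countable_coe_iff.1 hcount

theorem secondCountableTopology_of_sFinite_of_isOpenPosMeasure (μ : Measure X) [SFinite μ]
    [μ.IsOpenPosMeasure] : SecondCountableTopology X :=
  secondCountable_of_forall_isSeparated_countable fun _ hε _ hN ↦
    hN.countable_of_isOpenPosMeasure μ (by exact_mod_cast hε)

end OpenPosMeasure

theorem IsDoubling.isOpenPosMeasure {X : Type*} [MetricSpace X] [MeasurableSpace X]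
    {μ : Measure X} (hμ : IsDoubling μ) : μ.IsOpenPosMeasure := by
  obtain ⟨_, rμ, -, hrμ, hdbl⟩ := hμ
  refine ⟨fun U hU ⟨x, hxU⟩ ↦ ?_⟩
  obtain ⟨r, hr, hball⟩ := isOpen_iff.1 hU x hxU
  set ρ := min r rμ / 4 with hρ_def
  have hρ : 0 < ρ := by positivity
  have hρrμ : ρ < rμ := by linarith [min_le_right r rμ, hρ_def]
  have hsub : closedBall x (2 * ρ) ⊆ U :=
    (closedBall_subset_ball (by linarith [min_le_left r rμ, hρ_def])).trans hball
  exact ((hdbl x ρ hρ hρrμ).1.trans_le (measure_mono hsub)).ne'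

/-- On a nonseparable metric space there is no σ-finite doubling measure. -/
theorem no_sigmaFinite_doubling_of_nonseparable {X : Type*} [MetricSpace X]
    [MeasurableSpace X] [BorelSpace X] (hX : ¬ TopologicalSpace.SeparableSpace X)
    (μ : Measure X) : ¬ (SigmaFinite μ ∧ IsDoubling μ) := by
  rintro ⟨_, hdoubling⟩
  have := hdoubling.isOpenPosMeasure
  have := secondCountableTopology_of_sFinite_of_isOpenPosMeasure μ
  exact hX inferInstance
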